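/- For every item x and every time t, the Unbiased Space Saving sketch gives an unbiased estimate of the count of x: E[N̂_x(t)] = E[n_x(t)] (in particular, for a deterministic input stream, E[N̂_x(t)] = n_x(t)), where the expectation is over the randomness of the label-replacement coin flips. -/

import Mathlib

open MeasureTheory ProbabilityTheory Filter

/-- The state of a Space Saving sketch with `m` bins: each bin holds an
optional label (`none` = no label yet) and a count. -/
abbrev SSState (m : ℕ) := Fin m → Option ℕ × ℕ

/-- Initial state: all bins unlabeled with count 0. -/
def initState (m : ℕ) : SSState m := fun _ => (none, 0)

/-- The minimal bin count `N̂_min` (0 when `m = 0`). -/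
noncomputable def minCount {m : ℕ} (s : SSState m) : ℕ := ⨅ j, (s j).2

/-- The maximal bin count `N̂_max` (0 when `m = 0`). -/
noncomputable def maxCount {m : ℕ} (s : SSState m) : ℕ := ⨆ j, (s j).2

/-- Select a bin of minimal count using the tie-breaking randomness `v`:
among the `k` bins of minimal count (sorted by index), the one of rank
`⌊v * k⌋` (clamped) is chosen; this is a uniformly random choice among the
tied bins when `v` is uniform on `[0,1)`.  Returns `none` iff `m = 0`. -/
noncomputable def pickMin {m : ℕ} (s : SSState m) (v : ℝ) : Option (Fin m) :=
  let l := (Finset.univ.filter fun j => ∀ k, (s j).2 ≤ (s k).2).sort (· ≤ ·)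
  l[min (⌊v * l.length⌋.toNat) (l.length - 1)]?

/-- One step of the (Unbiased) Space Saving update upon arrival of item `x`,
with label-replacement randomness `u` and tie-breaking randomness `v`.
If `x` is a label of the sketch, its bin's count is incremented; otherwise a
minimal bin (count `N̂_min`) is selected, its count is incremented, and its
label is replaced by `x` iff `u < 1/(N̂_min + 1)` (so a uniform `u` on `[0,1)`
replaces the label with probability `1/(N̂_min+1)`; taking `u = 0` makes the
replacement always happen, which is the Deterministic Space Saving update). -/
noncomputable def ssUpdate {m : ℕ} (x : ℕ) (u v : ℝ) (s : SSState m) : SSState m :=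
  if ∃ j, (s j).1 = some x then
    fun j => if (s j).1 = some x then (some x, (s j).2 + 1) else s j
  else
    match pickMin s v with
    | none => s
    | some j₀ =>
        Function.update s j₀
          ((if u < 1 / (((s j₀).2 : ℝ) + 1) then some x else (s j₀).1), (s j₀).2 + 1)

/-- The sketch state after `t` stream elements, where the `r`-th element
(0-indexed) is `x r`, with randomness sequences `u` (label replacement)
and `v` (tie breaking). -/
noncomputable def ssRun (m : ℕ) (x : ℕ → ℕ) (u v : ℕ → ℝ) : ℕ → SSState m
  | 0 => initState m
  | t + 1 => ssUpdate (x t) (u t) (v t) (ssRun m x u v t)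

/-- Estimated count `N̂_i` of item `i`: the count of the bin labeled `i`,
or `0` if no bin is labeled `i`. -/
def ssEst {m : ℕ} (s : SSState m) (i : ℕ) : ℕ :=
  ∑ j, if (s j).1 = some i then (s j).2 else 0

/-- `Z_i = 1`: item `i` is one of the labels of the sketch. -/
def isLabel {m : ℕ} (s : SSState m) (i : ℕ) : Prop := ∃ j, (s j).1 = some i

/-- True count `n_i(t)` of item `i` among the first `t` stream elements. -/
def trueCount (x : ℕ → ℕ) (i t : ℕ) : ℕ :=
  ((Finset.range t).filter fun r => x r = i).card

/-- The uniform distribution on `[0,1)`. -/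
noncomputable def unif01 : Measure ℝ := volume.restrict (Set.Ico (0:ℝ) 1)

/-- The law on `ℕ` of a discrete item distribution with probabilities `p`. -/
noncomputable def itemLaw (p : ℕ → ℝ) : Measure ℕ :=
  Measure.sum fun i => ENNReal.ofReal (p i) • Measure.dirac i

open scoped ENNReal

/-!
Conditionally on the current state `s`, one update raises `N̂_a` by `[x = a]` in expectation.
If `x` already labels a bin, this is deterministic: labels stay pairwise distinct, so at most
one bin carries `a`. Otherwise the chosen bin, of count `c` and label `l`, gets count `c + 1` and
label `x` with probability `1 / (c + 1)`, label `l` otherwise, so its expected contribution to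
`N̂_a` becomes `(c + 1) (1/(c+1) [x = a] + c/(c+1) [l = a]) = [x = a] + c [l = a]`.
The state after `t` steps is a measurable function of the first `t` coin pairs, hence independent
of the next one, so these conditional increments add up to `n_a(t)`. Working with lower
Lebesgue integrals avoids any integrability bookkeeping.
-/

instance (α : Type*) : MeasurableSpace (Option α) := ⊤

instance (α : Type*) : DiscreteMeasurableSpace (Option α) := ⟨fun _ => trivial⟩

instance : IsProbabilityMeasure unif01 := ⟨by simp [unif01]⟩

namespace ProbabilityTheory

section Recursion

variable {Ω α β : Type*} {mΩ : MeasurableSpace Ω} [mα : MeasurableSpace α] [MeasurableSpace β]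
  {W : ℕ → Ω → α} {S : ℕ → Ω → β} {F : ℕ → α × β → β}

lemma measurable_biSup_comap_of_recursion (hF : ∀ t, Measurable (F t)) {b : β}
    (hS₀ : S 0 = fun _ => b) (hS : ∀ t ω, S (t + 1) ω = F t (W t ω, S t ω)) (t : ℕ) :
    Measurable[⨆ r ∈ Set.Iio t, MeasurableSpace.comap (W r) mα] (S t) := by
  induction t with
  | zero => rw [hS₀]; exact measurable_const
  | succ t ih =>
    have hW : Measurable[⨆ r ∈ Set.Iio (t + 1), MeasurableSpace.comap (W r) mα] (W t) :=
      (comap_measurable (W t)).mono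
        (le_iSup₂ (f := fun r (_ : r ∈ Set.Iio (t + 1)) => MeasurableSpace.comap (W r) mα) t
          t.lt_succ_self) le_rfl
    have hSt := ih.mono (biSup_mono fun r (hr : r < t) => hr.trans t.lt_succ_self) le_rfl
    rw [show S (t + 1) = fun ω => F t (W t ω, S t ω) from funext (hS t)]
    exact (hF t).comp (hW.prodMk hSt)

lemma iIndepFun.indepFun_of_recursion {P : Measure Ω} (hW : ∀ t, Measurable (W t))
    (hind : iIndepFun W P) (hF : ∀ t, Measurable (F t)) {b : β}
    (hS₀ : S 0 = fun _ => b) (hS : ∀ t ω, S (t + 1) ω = F t (W t ω, S t ω)) (t : ℕ) :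
    IndepFun (W t) (S t) P := by
  rw [IndepFun_iff_Indep]
  refine indep_of_indep_of_le
    (indep_iSup_of_disjoint (fun r => (hW r).comap_le) hind.iIndep
      (S := {t}) (T := Set.Iio t) (by simp)) ?_
    (measurable_biSup_comap_of_recursion hF hS₀ hS t).comap_le
  exact le_iSup₂ (f := fun r (_ : r ∈ ({t} : Set ℕ)) => MeasurableSpace.comap (W r) mα) t rfl

end Recursion

lemma IndepFun.lintegral_comp_prodMk {Ω α β : Type*} {mΩ : MeasurableSpace Ω} [MeasurableSpace α]
    [MeasurableSpace β] {P : Measure Ω} [IsFiniteMeasure P] {X : Ω → α} {Y : Ω → β}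
    (hX : Measurable X) (hY : Measurable Y) (hXY : IndepFun X Y P)
    {f : α × β → ℝ≥0∞} (hf : Measurable f) :
    ∫⁻ ω, f (X ω, Y ω) ∂P = ∫⁻ ω, ∫⁻ x, f (x, Y ω) ∂(P.map X) ∂P := by
  rw [← lintegral_map hf (hX.prodMk hY),
    (indepFun_iff_map_prod_eq_prod_map_map hX.aemeasurable hY.aemeasurable).mp hXY,
    lintegral_prod_symm _ hf.aemeasurable, lintegral_map hf.lintegral_prod_left' hY]

end ProbabilityTheory

lemma lintegral_unif01_ite_lt (c : ℕ) (A B : ℝ≥0∞) :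
    ∫⁻ u, (if u < 1 / ((c : ℝ) + 1) then (c + 1) * A else (c + 1) * B) ∂unif01 = A + c * B := by
  set r : ℝ := 1 / ((c : ℝ) + 1)
  have hr₀ : 0 ≤ r := by positivity
  have hr₁ : r ≤ 1 := by rw [div_le_one (by positivity)]; linarith [c.cast_nonneg (α := ℝ)]
  have hIio : unif01 (Set.Iio r) = ENNReal.ofReal r := by
    rw [unif01, Measure.restrict_apply measurableSet_Iio, Set.inter_comm, Set.Ico_inter_Iio,
      min_eq_right hr₁, Real.volume_Ico, sub_zero]
  have hIci : unif01 (Set.Iio r)ᶜ = ENNReal.ofReal (1 - r) := by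
    rw [prob_compl_eq_one_sub measurableSet_Iio, hIio, ENNReal.ofReal_sub _ hr₀, ENNReal.ofReal_one]
  have hc : ((c : ℝ≥0∞) + 1) = ENNReal.ofReal ((c : ℝ) + 1) := by
    rw [ENNReal.ofReal_add (by positivity) zero_le_one]; simp
  have h₁ : ((c : ℝ≥0∞) + 1) * unif01 (Set.Iio r) = 1 := by
    rw [hIio, hc, ← ENNReal.ofReal_mul (by positivity), mul_one_div_cancel (by positivity),
      ENNReal.ofReal_one]
  have h₂ : ((c : ℝ≥0∞) + 1) * unif01 (Set.Iio r)ᶜ = c := by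
    rw [hIci, hc, ← ENNReal.ofReal_mul (by positivity), mul_sub, mul_one_div_cancel (by positivity)]
    simp
  have hlow : ∫⁻ u in Set.Iio r, (if u < r then (c + 1) * A else (c + 1) * B) ∂unif01
      = (c + 1) * A * unif01 (Set.Iio r) := by
    rw [setLIntegral_congr_fun measurableSet_Iio fun u (hu : u < r) => if_pos hu,
      setLIntegral_const]
  have hhigh : ∫⁻ u in (Set.Iio r)ᶜ, (if u < r then (c + 1) * A else (c + 1) * B) ∂unif01
      = (c + 1) * B * unif01 (Set.Iio r)ᶜ := by
    rw [setLIntegral_congr_fun measurableSet_Iio.compl fun u (hu : ¬u < r) => if_neg hu,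
      setLIntegral_const]
  rw [← lintegral_add_compl _ measurableSet_Iio, hlow, hhigh]
  calc (c + 1) * A * unif01 (Set.Iio r) + (c + 1) * B * unif01 (Set.Iio r)ᶜ
      = A * ((c + 1) * unif01 (Set.Iio r)) + B * ((c + 1) * unif01 (Set.Iio r)ᶜ) := by ring
    _ = A + c * B := by rw [h₁, h₂]; ring

lemma trueCount_succ (x : ℕ → ℕ) (a t : ℕ) :
    trueCount x a (t + 1) = trueCount x a t + if x t = a then 1 else 0 := by
  unfold trueCount
  rw [Finset.range_add_one, Finset.filter_insert]
  split_ifs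
  · exact Finset.card_insert_of_notMem (by simp)
  · rfl

section SpaceSaving

variable {m : ℕ}

def LabelsDistinct (s : SSState m) : Prop :=
  ∀ (i : ℕ) (j k : Fin m), (s j).1 = some i → (s k).1 = some i → j = k

lemma ssUpdate_of_isLabel {b : ℕ} {s : SSState m} (hb : isLabel s b) (u v : ℝ) :
    ssUpdate b u v s = fun j => if (s j).1 = some b then (some b, (s j).2 + 1) else s j :=
  if_pos hb

lemma ssUpdate_of_not_isLabel {b : ℕ} {s : SSState m} (hb : ¬isLabel s b) (u v : ℝ) :
    ssUpdate b u v s = (pickMin s v).elim s fun j₀ => Function.update s j₀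
      ((if u < 1 / (((s j₀).2 : ℝ) + 1) then some b else (s j₀).1), (s j₀).2 + 1) := by
  rw [ssUpdate, if_neg (show ¬∃ j, (s j).1 = some b from hb)]
  cases pickMin s v <;> rfl

lemma exists_pickMin_eq_some (hm : 0 < m) (s : SSState m) (v : ℝ) :
    ∃ j₀, pickMin s v = some j₀ := by
  obtain ⟨j, -, hj⟩ := Finset.exists_min_image Finset.univ (fun j => (s j).2)
    ⟨⟨0, hm⟩, Finset.mem_univ _⟩
  set l := (Finset.univ.filter fun j : Fin m => ∀ k, (s j).2 ≤ (s k).2).sort (· ≤ ·)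
  have hjl : j ∈ l := by simpa [l] using fun k => hj k (Finset.mem_univ _)
  have hidx : min (⌊v * l.length⌋.toNat) (l.length - 1) < l.length :=
    (min_le_right _ _).trans_lt (Nat.sub_one_lt (List.length_pos_of_mem hjl).ne')
  exact ⟨_, List.getElem?_eq_getElem hidx⟩

lemma LabelsDistinct.update {s : SSState m} (hs : LabelsDistinct s) {j₀ : Fin m}
    {p : Option ℕ × ℕ} (hp : ∀ i, p.1 = some i → ∀ k ≠ j₀, (s k).1 ≠ some i) :
    LabelsDistinct (Function.update s j₀ p) := by
  intro i j k hj hk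
  by_cases hjj : j = j₀ <;> by_cases hkk : k = j₀
  · rw [hjj, hkk]
  · subst hjj; simp only [Function.update_self, Function.update_of_ne hkk] at hj hk
    exact (hp i hj k hkk hk).elim
  · subst hkk; simp only [Function.update_self, Function.update_of_ne hjj] at hj hk
    exact (hp i hk j hjj hj).elim
  · simp only [Function.update_of_ne hjj, Function.update_of_ne hkk] at hj hk
    exact hs i j k hj hk

lemma labelsDistinct_ssUpdate (b : ℕ) (u v : ℝ) {s : SSState m} (hs : LabelsDistinct s) :
    LabelsDistinct (ssUpdate b u v s) := by
  by_cases hb : isLabel s b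
  · have hlabel : ∀ j, (ssUpdate b u v s j).1 = (s j).1 := fun j => by
      rw [ssUpdate_of_isLabel hb]; dsimp only; split_ifs with h <;> simp [h]
    intro i j k
    rw [hlabel, hlabel]
    exact hs i j k
  · rw [ssUpdate_of_not_isLabel hb]
    rcases pickMin s v with _ | j₀
    · exact hs
    refine hs.update fun i hi k hk hki => ?_
    split_ifs at hi
    · exact hb ⟨k, Option.some_inj.mp hi ▸ hki⟩
    · exact hk (hs i k j₀ hki hi)

lemma labelsDistinct_ssRun (x : ℕ → ℕ) (u v : ℕ → ℝ) (t : ℕ) :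
    LabelsDistinct (ssRun m x u v t) := by
  induction t with
  | zero => intro i j k hj; simp [ssRun, initState] at hj
  | succ t ih => exact labelsDistinct_ssUpdate _ _ _ ih

lemma measurable_pickMin (s : SSState m) : Measurable (pickMin s) := by
  set l := (Finset.univ.filter fun j : Fin m => ∀ k, (s j).2 ≤ (s k).2).sort (· ≤ ·)
  change Measurable ((fun n : ℤ => l[min n.toNat (l.length - 1)]?) ∘ fun v : ℝ => ⌊v * l.length⌋)
  exact measurable_from_top.comp (measurable_id.mul_const _).floor

lemma measurable_ssUpdate (b : ℕ) (s : SSState m) :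
    Measurable fun w : ℝ × ℝ => ssUpdate b w.1 w.2 s := by
  by_cases hb : isLabel s b
  · simp_rw [ssUpdate_of_isLabel hb]
    exact measurable_const
  simp_rw [ssUpdate_of_not_isLabel hb]
  refine (measurable_from_prod_countable_left (f := fun q : ℝ × Option (Fin m) =>
      q.2.elim s fun j₀ => Function.update s j₀
        ((if q.1 < 1 / (((s j₀).2 : ℝ) + 1) then some b else (s j₀).1), (s j₀).2 + 1))
      fun o => ?_).comp (measurable_fst.prodMk ((measurable_pickMin s).comp measurable_snd))
  rcases o with _ | j₀
  · exact measurable_const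
  · exact (measurable_from_top (f := fun o => Function.update s j₀ (o, (s j₀).2 + 1))).comp
      (Measurable.ite measurableSet_Iio measurable_const measurable_const)

lemma ssEst_ssUpdate_of_isLabel {b : ℕ} {s : SSState m} (hs : LabelsDistinct s)
    (hb : isLabel s b) (u v : ℝ) (a : ℕ) :
    ssEst (ssUpdate b u v s) a = ssEst s a + if b = a then 1 else 0 := by
  rw [ssUpdate_of_isLabel hb]
  unfold ssEst
  split_ifs with hba
  · subst hba
    obtain ⟨j₁, hj₁⟩ := hb
    have hother : ∀ j ≠ j₁, (s j).1 ≠ some b := fun j hj h => hj (hs b j j₁ h hj₁)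
    rw [Finset.sum_eq_single j₁ (fun j _ hj => by simp [hother j hj]) (by simp),
      Finset.sum_eq_single j₁ (fun j _ hj => by simp [hother j hj]) (by simp)]
    simp [hj₁]
  · refine (Finset.sum_congr rfl fun j _ => ?_).trans (add_zero _).symm
    by_cases h : (s j).1 = some b <;> simp [h, hba]

lemma ssEst_update_add (s : SSState m) (j₀ : Fin m) (p : Option ℕ × ℕ) (a : ℕ) :
    ssEst (Function.update s j₀ p) a + (if (s j₀).1 = some a then (s j₀).2 else 0)
      = ssEst s a + if p.1 = some a then p.2 else 0 := by
  unfold ssEst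
  rw [← Finset.add_sum_erase _ _ (Finset.mem_univ j₀),
    ← Finset.add_sum_erase _ _ (Finset.mem_univ j₀), Function.update_self,
    Finset.sum_congr rfl fun j hj => by rw [Function.update_of_ne (Finset.ne_of_mem_erase hj)]]
  ring

lemma lintegral_ssEst_ssUpdate_of_not_isLabel (hm : 0 < m) {b : ℕ} {s : SSState m}
    (hb : ¬isLabel s b) (v : ℝ) (a : ℕ) :
    ∫⁻ u, (ssEst (ssUpdate b u v s) a : ℝ≥0∞) ∂unif01 = ssEst s a + if b = a then 1 else 0 := by
  obtain ⟨j₀, hj₀⟩ := exists_pickMin_eq_some hm s v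
  set c := (s j₀).2
  set A : ℝ≥0∞ := if b = a then 1 else 0
  set B : ℝ≥0∞ := if (s j₀).1 = some a then 1 else 0
  have hupdate : ∀ u, (ssEst (ssUpdate b u v s) a : ℝ≥0∞) + c * B
      = ssEst s a + if u < 1 / ((c : ℝ) + 1) then (c + 1) * A else (c + 1) * B := by
    intro u
    have hold : (c : ℝ≥0∞) * B = ((if (s j₀).1 = some a then c else 0 : ℕ) : ℝ≥0∞) := by
      simp only [B]; split_ifs <;> simp
    have hnew : (if u < 1 / ((c : ℝ) + 1) then (c + 1) * A else (c + 1) * B)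
        = ((if (if u < 1 / ((c : ℝ) + 1) then some b else (s j₀).1) = some a then c + 1 else 0
          : ℕ) : ℝ≥0∞) := by
      simp only [A, B]; split_ifs <;> simp_all
    rw [ssUpdate_of_not_isLabel hb, hj₀, Option.elim_some, hold, hnew]
    exact_mod_cast ssEst_update_add s j₀ _ a
  have hint := lintegral_congr (μ := unif01) hupdate
  rw [lintegral_add_right _ measurable_const, lintegral_add_left measurable_const,
    lintegral_unif01_ite_lt, lintegral_const, lintegral_const, measure_univ, mul_one, mul_one,
    ← add_assoc] at hint
  exact (ENNReal.add_left_inj (by finiteness)).mp hint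

lemma lintegral_ssEst_ssUpdate (hm : 0 < m) {s : SSState m} (hs : LabelsDistinct s) (b a : ℕ) :
    ∫⁻ w, (ssEst (ssUpdate b w.1 w.2 s) a : ℝ≥0∞) ∂(unif01.prod unif01)
      = ssEst s a + if b = a then 1 else 0 := by
  by_cases hb : isLabel s b
  · simp [ssEst_ssUpdate_of_isLabel hs hb]
  · have hmeas : Measurable fun w : ℝ × ℝ => (ssEst (ssUpdate b w.1 w.2 s) a : ℝ≥0∞) :=
      (measurable_of_countable fun s' : SSState m => (ssEst s' a : ℝ≥0∞)).comp
        (measurable_ssUpdate b s)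
    rw [lintegral_prod_symm _ hmeas.aemeasurable]
    simp [lintegral_ssEst_ssUpdate_of_not_isLabel hm hb]

lemma measurable_ssUpdate_uncurry (b : ℕ) :
    Measurable fun p : (ℝ × ℝ) × SSState m => ssUpdate b p.1.1 p.1.2 p.2 :=
  measurable_from_prod_countable_left (measurable_ssUpdate b)

variable {Ω : Type*} [MeasurableSpace Ω] {W : ℕ → Ω → ℝ × ℝ}

lemma measurable_ssRun (hW : ∀ t, Measurable (W t)) (x : ℕ → ℕ) (t : ℕ) :
    Measurable fun ω => ssRun m x (fun r => (W r ω).1) (fun r => (W r ω).2) t := by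
  induction t with
  | zero => exact measurable_const
  | succ t ih => exact (measurable_ssUpdate_uncurry (x t)).comp ((hW t).prodMk ih)

lemma lintegral_ssEst_ssRun (hm : 0 < m) {P : Measure Ω} [IsProbabilityMeasure P]
    (hW : ∀ t, Measurable (W t)) (hindep : iIndepFun W P)
    (hlaw : ∀ t, P.map (W t) = unif01.prod unif01) (x : ℕ → ℕ) (a t : ℕ) :
    ∫⁻ ω, (ssEst (ssRun m x (fun r => (W r ω).1) (fun r => (W r ω).2) t) a : ℝ≥0∞) ∂P
      = trueCount x a t := by
  set S : ℕ → Ω → SSState m := fun t ω => ssRun m x (fun r => (W r ω).1) (fun r => (W r ω).2) t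
  set F : ℕ → (ℝ × ℝ) × SSState m → SSState m := fun t p => ssUpdate (x t) p.1.1 p.1.2 p.2
  have hF : ∀ t, Measurable (F t) := fun t => measurable_ssUpdate_uncurry (x t)
  have hS : ∀ t ω, S (t + 1) ω = F t (W t ω, S t ω) := fun _ _ => rfl
  induction t with
  | zero => simp [ssRun, initState, ssEst, trueCount]
  | succ t ih =>
    calc ∫⁻ ω, (ssEst (S (t + 1) ω) a : ℝ≥0∞) ∂P
        = ∫⁻ ω, ∫⁻ w, (ssEst (F t (w, S t ω)) a : ℝ≥0∞) ∂(P.map (W t)) ∂P :=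
          (hindep.indepFun_of_recursion hW hF rfl hS t).lintegral_comp_prodMk (hW t)
            (measurable_ssRun hW x t)
            ((measurable_of_countable fun s : SSState m => (ssEst s a : ℝ≥0∞)).comp (hF t))
      _ = ∫⁻ ω, ((ssEst (S t ω) a : ℝ≥0∞) + if x t = a then 1 else 0) ∂P := by
          rw [hlaw t]
          exact lintegral_congr fun ω =>
            lintegral_ssEst_ssUpdate hm (labelsDistinct_ssRun x _ _ t) (x t) a
      _ = trueCount x a (t + 1) := by
          rw [lintegral_add_right _ measurable_const, ih, lintegral_const, measure_univ, mul_one,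
            trueCount_succ]
          push_cast
          rfl

end SpaceSaving

/-- Theorem 1 of the paper.  For any item `a` and any time
`t`, Unbiased Space Saving gives an unbiased estimate of the count of `a`:
for a (deterministic) input stream `x`, `E[N̂_a(t)] = n_a(t)`, the expectation
being over the i.i.d. uniform label-replacement and tie-breaking randomness. -/
theorem unbiased_space_saving_is_unbiased
    {Ω : Type*} [MeasurableSpace Ω] (P : Measure Ω) [IsProbabilityMeasure P]
    (m : ℕ) (hm : 0 < m)
    (U V : ℕ → Ω → ℝ)
    (hmeas : ∀ t, Measurable fun ω => (U t ω, V t ω))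
    (hindep : iIndepFun (fun t ω => (U t ω, V t ω)) P)
    (hlaw : ∀ t, Measure.map (fun ω => (U t ω, V t ω)) P = unif01.prod unif01)
    (x : ℕ → ℕ) (a : ℕ) (t : ℕ) :
    ∫ ω, (ssEst (ssRun m x (fun r => U r ω) (fun r => V r ω) t) a : ℝ) ∂P
      = trueCount x a t := by
  have hEst : Measurable fun ω => (ssEst (ssRun m x (fun r => U r ω) (fun r => V r ω) t) a : ℝ) :=
    (measurable_of_countable fun s : SSState m => (ssEst s a : ℝ)).comp
      (measurable_ssRun hmeas x t)
  rw [integral_eq_lintegral_of_nonneg_ae (ae_of_all _ fun _ => Nat.cast_nonneg _)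
    hEst.aestronglyMeasurable]
  simp_rw [ENNReal.ofReal_natCast]
  rw [lintegral_ssEst_ssRun hm hmeas hindep hlaw x a t, ENNReal.toReal_natCast]
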